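/- arXiv:2211.10066 — 2 statements merged into one kernel-verified Lean document; each statement's English description precedes it below -/
import Mathlib

section
/- For x ∈ L^d lying in a Minkowski space (⟨x,x⟩_L = −1, x₀ > 0) and v a unit tangent vector at x⁰, setting c = ⟨x, x⁰+v⟩_L and u = (1+c)/(1−c), the point P̃^v(x) = ((1+u²)/(1−u²))·x⁰ + (2u/(1−u²))·v lies on the geodesic span(x⁰,v) ∩ L^d and satisfies B_v(P̃^v(x)) = B_v(x), where B_v(y) = log(−⟨y, x⁰+v⟩_L). -/
open MeasureTheory

noncomputable def arcosh (x : ℝ) : ℝ := Real.log (x + Real.sqrt (x^2 - 1))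

noncomputable def mink (d : ℕ) (x y : Fin (d+1) → ℝ) : ℝ :=
  -(x 0 * y 0) + ∑ i : Fin d, x i.succ * y i.succ

def LorentzSet (d : ℕ) : Set (Fin (d+1) → ℝ) :=
  {x | mink d x x = -1 ∧ 0 < x 0}

noncomputable def dL (d : ℕ) (x y : Fin (d+1) → ℝ) : ℝ :=
  arcosh (-(mink d x y))

noncomputable def lorOrigin (d : ℕ) : Fin (d+1) → ℝ := fun i => if i = 0 then 1 else 0

/-!
Write `ℓ = x⁰ + v`; it is a future null vector, so by the reverse Cauchy–Schwarz inequality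
`c = ⟨x, ℓ⟩_L < 0` and `u = (1 + c)/(1 - c) ∈ (-1, 1)`. The coefficients
`a = (1 + u²)/(1 - u²)` and `b = 2u/(1 - u²)` are the Cayley parametrisation of the hyperbola
`b² - a² = -1, a > 0`, so `P = a x⁰ + b v` lies on `L^d`, and
`⟨P, ℓ⟩_L = b - a = -(1 - u)/(1 + u) = c`.
-/

section Minkowski

variable {d : ℕ}

theorem mink_comm (x y : Fin (d+1) → ℝ) : mink d x y = mink d y x := by
  simp only [mink, mul_comm]

theorem mink_add_left (x y z : Fin (d+1) → ℝ) : mink d (x + y) z = mink d x z + mink d y z := by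
  simp only [mink, Pi.add_apply, add_mul, Finset.sum_add_distrib]
  ring

theorem mink_smul_left (a : ℝ) (x y : Fin (d+1) → ℝ) : mink d (a • x) y = a * mink d x y := by
  simp only [mink, Pi.smul_apply, smul_eq_mul, mul_assoc, ← Finset.mul_sum]
  ring

theorem mink_add_right (x y z : Fin (d+1) → ℝ) : mink d x (y + z) = mink d x y + mink d x z := by
  rw [mink_comm, mink_add_left, mink_comm y, mink_comm z]

theorem mink_smul_right (a : ℝ) (x y : Fin (d+1) → ℝ) : mink d x (a • y) = a * mink d x y := by
  rw [mink_comm, mink_smul_left, mink_comm]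

theorem mink_self (x : Fin (d+1) → ℝ) : mink d x x = -x 0 ^ 2 + ∑ i : Fin d, x i.succ ^ 2 := by
  simp only [mink, sq]

theorem mink_lorOrigin_left (y : Fin (d+1) → ℝ) : mink d (lorOrigin d) y = -y 0 := by
  simp [mink, lorOrigin, Fin.succ_ne_zero]

theorem mink_neg_of_timelike_of_causal {x y : Fin (d+1) → ℝ} (hx : mink d x x < 0) (hx0 : 0 < x 0)
    (hy : mink d y y ≤ 0) (hy0 : 0 < y 0) : mink d x y < 0 := by
  rw [mink_self] at hx hy
  set X := ∑ i : Fin d, x i.succ ^ 2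
  set Y := ∑ i : Fin d, y i.succ ^ 2
  have hX : 0 ≤ X := by positivity
  have hY : 0 ≤ Y := by positivity
  have hspatial : (∑ i : Fin d, x i.succ * y i.succ) ^ 2 < (x 0 * y 0) ^ 2 :=
    calc (∑ i : Fin d, x i.succ * y i.succ) ^ 2 ≤ X * Y := Finset.sum_mul_sq_le_sq_mul_sq _ _ _
      _ ≤ X * y 0 ^ 2 := by gcongr; linarith
      _ < x 0 ^ 2 * y 0 ^ 2 := by gcongr; linarith
      _ = (x 0 * y 0) ^ 2 := by ring
  have := (abs_lt_of_sq_lt_sq' hspatial (by positivity)).2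
  rw [mink]
  linarith

variable {v : Fin (d+1) → ℝ}

theorem mink_smul_lorOrigin_add_smul (hv0 : v 0 = 0) (hv : mink d v v = 1) (a b a' b' : ℝ) :
    mink d (a • lorOrigin d + b • v) (a' • lorOrigin d + b' • v) = b * b' - a * a' := by
  have hov : mink d (lorOrigin d) v = 0 := by rw [mink_lorOrigin_left, hv0, neg_zero]
  have hoo : mink d (lorOrigin d) (lorOrigin d) = -1 := by simp [mink_lorOrigin_left, lorOrigin]
  simp only [mink_add_left, mink_add_right, mink_smul_left, mink_smul_right, mink_comm v,
    hov, hoo, hv]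
  ring

theorem mink_lorOrigin_add_self (hv0 : v 0 = 0) (hv : mink d v v = 1) :
    mink d (lorOrigin d + v) (lorOrigin d + v) = 0 := by
  simpa using mink_smul_lorOrigin_add_smul hv0 hv 1 1 1 1

theorem mink_lorOrigin_add_neg (hv0 : v 0 = 0) (hv : mink d v v = 1) {x : Fin (d+1) → ℝ}
    (hx : x ∈ LorentzSet d) : mink d x (lorOrigin d + v) < 0 :=
  mink_neg_of_timelike_of_causal (by linarith [hx.1]) hx.2
    (mink_lorOrigin_add_self hv0 hv).le (by simp [lorOrigin, hv0])

end Minkowski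

theorem cayley_sq_sub_sq {u : ℝ} (hu : u ^ 2 < 1) :
    (2 * u / (1 - u ^ 2)) ^ 2 - ((1 + u ^ 2) / (1 - u ^ 2)) ^ 2 = -1 := by
  have : 1 - u ^ 2 ≠ 0 := by linarith
  field_simp
  ring

theorem cayley_sq_lt_one {c : ℝ} (hc : c < 0) : ((1 + c) / (1 - c)) ^ 2 < 1 := by
  rw [sq_lt_one_iff_abs_lt_one, abs_lt, lt_div_iff₀ (by linarith), div_lt_one (by linarith)]
  constructor <;> linarith

theorem cayley_sub {c : ℝ} (hc : c < 0) :
    let u := (1 + c) / (1 - c)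
    2 * u / (1 - u ^ 2) - (1 + u ^ 2) / (1 - u ^ 2) = c := by
  intro u
  have hu : u * (1 - c) = 1 + c := div_mul_cancel₀ _ (by linarith)
  have hu2 : 1 - u ^ 2 ≠ 0 := by linarith [cayley_sq_lt_one hc]
  rw [div_sub_div_same, div_eq_iff hu2]
  linear_combination (1 - u) * hu

/-- the horospherical projection point lies on the geodesic
`span(x⁰,v) ∩ L^d` and has the same Busemann value as `x`. -/
theorem horospherical_projection_on_geodesic_same_busemann (d : ℕ)
    (v : Fin (d+1) → ℝ) (hv0 : v 0 = 0) (hv : mink d v v = 1)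
    (x : Fin (d+1) → ℝ) (hx : x ∈ LorentzSet d) :
    let c := mink d x (fun i => lorOrigin d i + v i)
    let u := (1 + c) / (1 - c)
    let P : Fin (d+1) → ℝ :=
      fun i => ((1 + u^2) / (1 - u^2)) * lorOrigin d i + (2*u / (1 - u^2)) * v i
    (P ∈ Submodule.span ℝ {lorOrigin d, v} ∧ P ∈ LorentzSet d) ∧
      Real.log (-(mink d P (fun i => lorOrigin d i + v i))) =
        Real.log (-(mink d x (fun i => lorOrigin d i + v i))) := by
  intro c u P
  have hc : c < 0 := mink_lorOrigin_add_neg hv0 hv hx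
  have hu : u ^ 2 < 1 := cayley_sq_lt_one hc
  have hP : P = ((1 + u^2) / (1 - u^2)) • lorOrigin d + (2*u / (1 - u^2)) • v := rfl
  have hPc : mink d P (lorOrigin d + v) = c := by
    rw [hP, ← one_smul ℝ (lorOrigin d + v), smul_add, mink_smul_lorOrigin_add_smul hv0 hv,
      mul_one, mul_one]
    exact cayley_sub hc
  refine ⟨⟨Submodule.mem_span_pair.2 ⟨_, _, hP.symm⟩, ?_, ?_⟩, congrArg _ (congrArg _ hPc)⟩
  · rw [hP, mink_smul_lorOrigin_add_smul hv0 hv, ← sq, ← sq, cayley_sq_sub_sq hu]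
  · simp only [hP, Pi.add_apply, Pi.smul_apply, smul_eq_mul, hv0, lorOrigin, if_pos, mul_one,
      mul_zero, add_zero]
    exact div_pos (by positivity) (by linarith)
end

section
/- Horospherical projections commute with the Poincaré-to-Lorentz map: for every ideal point ṽ ∈ S^{d−1}, letting v = (0, ṽ), one has P_{B→L}(P̃^{ṽ}(x)) = P̃^v(P_{B→L}(x)) for all x ∈ B^d, where P̃^{ṽ}(x) = ((1−‖x‖₂²−‖ṽ−x‖₂²)/(1−‖x‖₂²+‖ṽ−x‖₂²))·ṽ and P̃^v(y) = −(1/(2⟨y,x⁰+v⟩_L))((1+⟨y,x⁰+v⟩_L²)x⁰ + (1−⟨y,x⁰+v⟩_L²)v). -/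
/-! Put `u = ‖ṽ - x‖² / (1 - ‖x‖²)`. Since `‖ṽ‖ = 1`, the Lorentz pairing is
`⟨P_{B→L}(x), x⁰ + v⟩_L = -u`, and the Poincaré projection is `((1 - u) / (1 + u)) ṽ`.
Writing `u = exp (-τ)`, this is `tanh (τ / 2) ṽ`, which `P_{B→L}` sends to
`cosh τ x⁰ + sinh τ v`; the Lorentz projection evaluates to the same point. -/

open MeasureTheory

/-- Squared Euclidean norm. -/
noncomputable def nsq (d : ℕ) (x : Fin d → ℝ) : ℝ := ∑ i, (x i)^2

/-- The Poincaré ball. -/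
def BallSet (d : ℕ) : Set (Fin d → ℝ) := {x | nsq d x < 1}

/-- Poincaré ball distance. -/
noncomputable def dB (d : ℕ) (x y : Fin d → ℝ) : ℝ :=
  arcosh (1 + 2 * nsq d (x - y) / ((1 - nsq d x) * (1 - nsq d y)))

/-- The map from the Poincaré ball to the Lorentz model. -/
noncomputable def PBL (d : ℕ) (x : Fin d → ℝ) : Fin (d+1) → ℝ :=
  Fin.cons ((1 + nsq d x) / (1 - nsq d x)) (fun i => 2 * x i / (1 - nsq d x))

/-- The map from the Lorentz model to the Poincaré ball. -/
noncomputable def PLB (d : ℕ) (y : Fin (d+1) → ℝ) : Fin d → ℝ :=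
  fun i => y i.succ / (1 + y 0)

/-- Horospherical projection in the Poincaré ball, onto the geodesic towards the
ideal point `ṽ`. -/
noncomputable def PtB (d : ℕ) (vt x : Fin d → ℝ) : Fin d → ℝ := fun i =>
  ((1 - nsq d x - nsq d (vt - x)) / (1 - nsq d x + nsq d (vt - x))) * vt i

/-- Horospherical projection in the Lorentz model, onto the geodesic with
direction `v`. -/
noncomputable def PtL (d : ℕ) (v y : Fin (d+1) → ℝ) : Fin (d+1) → ℝ := fun i =>
  -(1 / (2 * mink d y (fun j => lorOrigin d j + v j))) *
    ((1 + (mink d y (fun j => lorOrigin d j + v j))^2) * lorOrigin d i +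
      (1 - (mink d y (fun j => lorOrigin d j + v j))^2) * v i)

lemma nsq_const_mul (d : ℕ) (c : ℝ) (v : Fin d → ℝ) :
    nsq d (fun i => c * v i) = c ^ 2 * nsq d v := by
  simp only [nsq, mul_pow, Finset.mul_sum]

lemma nsq_sub (d : ℕ) (v x : Fin d → ℝ) :
    nsq d (v - x) = nsq d v - 2 * ∑ i, v i * x i + nsq d x := by
  simp only [nsq, Pi.sub_apply, Finset.mul_sum, ← Finset.sum_sub_distrib,
    ← Finset.sum_add_distrib]
  exact Finset.sum_congr rfl fun _ _ => by ring

lemma nsq_eq_zero_iff {d : ℕ} {y : Fin d → ℝ} : nsq d y = 0 ↔ y = 0 := by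
  simp only [nsq, Finset.sum_eq_zero_iff_of_nonneg fun i _ => sq_nonneg (y i),
    Finset.mem_univ, true_implies, pow_eq_zero_iff two_ne_zero, funext_iff, Pi.zero_apply]

lemma nsq_sub_pos_of_mem_ballSet {d : ℕ} {v x : Fin d → ℝ} (hv : nsq d v = 1)
    (hx : x ∈ BallSet d) : 0 < nsq d (v - x) := by
  refine (Finset.sum_nonneg fun i _ => sq_nonneg _).lt_of_ne' fun (h : nsq d (v - x) = 0) => ?_
  rw [nsq_eq_zero_iff, sub_eq_zero] at h
  exact (show nsq d x < 1 from hx).ne (h ▸ hv)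

lemma PtB_eq_const_mul {d : ℕ} (v x : Fin d → ℝ) (hx : 1 - nsq d x ≠ 0) :
    PtB d v x = fun i =>
      (1 - nsq d (v - x) / (1 - nsq d x)) / (1 + nsq d (v - x) / (1 - nsq d x)) * v i := by
  funext i
  simp only [PtB]
  congr 1
  rw [← div_div_div_cancel_right₀ hx, sub_div, add_div, div_self hx]

lemma PBL_const_mul {d : ℕ} {v : Fin d → ℝ} (hv : nsq d v = 1) (c : ℝ) :
    PBL d (fun i => c * v i) =
      Fin.cons ((1 + c ^ 2) / (1 - c ^ 2)) (fun i => 2 * c / (1 - c ^ 2) * v i) := by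
  simp only [PBL, nsq_const_mul, hv, mul_one]
  congr 1
  funext i
  ring

lemma mink_PBL_lorOrigin_add_cons {d : ℕ} {v : Fin d → ℝ} (hv : nsq d v = 1)
    (x : Fin d → ℝ) :
    mink d (PBL d x) (fun j => lorOrigin d j + (Fin.cons 0 v : Fin (d + 1) → ℝ) j) =
      -(nsq d (v - x) / (1 - nsq d x)) := by
  simp only [mink, PBL, lorOrigin, Fin.cons_zero, Fin.cons_succ, Fin.succ_ne_zero, if_true,
    if_false, zero_add, nsq_sub, hv]
  have hsum : ∑ i, 2 * x i / (1 - nsq d x) * v i = 2 * (∑ i, v i * x i) / (1 - nsq d x) := by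
    rw [Finset.mul_sum, Finset.sum_div]
    exact Finset.sum_congr rfl fun _ _ => by ring
  rw [hsum]
  ring

lemma PtL_cons_of_mink_eq {d : ℕ} {v : Fin d → ℝ} {y : Fin (d + 1) → ℝ} {m : ℝ}
    (hm : mink d y (fun j => lorOrigin d j + (Fin.cons 0 v : Fin (d + 1) → ℝ) j) = -m) :
    PtL d (Fin.cons 0 v) y =
      Fin.cons ((1 + m ^ 2) / (2 * m)) (fun i => (1 - m ^ 2) / (2 * m) * v i) := by
  funext i
  simp only [PtL, hm]
  refine Fin.cases ?_ (fun j => ?_) i <;>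
    simp only [lorOrigin, Fin.cons_zero, Fin.cons_succ, Fin.succ_ne_zero, if_true,
      if_false] <;> ring

lemma one_sub_sq_cayley {u : ℝ} (hu' : 1 + u ≠ 0) :
    1 - ((1 - u) / (1 + u)) ^ 2 = 4 * u / (1 + u) ^ 2 := by
  field_simp
  ring

lemma one_add_sq_div_one_sub_sq_cayley {u : ℝ} (hu : u ≠ 0) (hu' : 1 + u ≠ 0) :
    (1 + ((1 - u) / (1 + u)) ^ 2) / (1 - ((1 - u) / (1 + u)) ^ 2) = (1 + u ^ 2) / (2 * u) := by
  rw [one_sub_sq_cayley hu']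
  field_simp
  ring

lemma two_mul_div_one_sub_sq_cayley {u : ℝ} (hu : u ≠ 0) (hu' : 1 + u ≠ 0) :
    2 * ((1 - u) / (1 + u)) / (1 - ((1 - u) / (1 + u)) ^ 2) = (1 - u ^ 2) / (2 * u) := by
  rw [one_sub_sq_cayley hu']
  field_simp
  ring

/-- horospherical projections commute with the Poincaré-to-Lorentz
map. -/
theorem horospherical_projections_commute (d : ℕ) (vt : Fin d → ℝ)
    (hvt : nsq d vt = 1) (x : Fin d → ℝ) (hx : x ∈ BallSet d) :
    PBL d (PtB d vt x) = PtL d (Fin.cons 0 vt) (PBL d x) := by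
  have ha : 0 < 1 - nsq d x := sub_pos.2 hx
  have hu : 0 < nsq d (vt - x) / (1 - nsq d x) :=
    div_pos (nsq_sub_pos_of_mem_ballSet hvt hx) ha
  rw [PtB_eq_const_mul vt x ha.ne', PBL_const_mul hvt,
    PtL_cons_of_mink_eq (mink_PBL_lorOrigin_add_cons hvt x),
    one_add_sq_div_one_sub_sq_cayley hu.ne' (by positivity),
    two_mul_div_one_sub_sq_cayley hu.ne' (by positivity)]
end
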